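/- arXiv:2408.13982 — 7 statements merged into one kernel-verified Lean document; each statement's English description precedes it below -/
import Mathlib

section
/- Let Ω ⊆ ℝ² be open and let q : Ω → ℝ be smooth. Suppose there exist smooth functions Sˣ, Sʸ : Ω → ℝ satisfying on Ω: (E1) ∂_y Sˣ + ∂_x Sʸ = 4 q_x q_y; (E2) ∂_x Sˣ = 2 q_x²; (E3) ∂_y Sʸ = 2 q_y². Then q satisfies the degenerate homogeneous Monge–Ampère equation q_xx · q_yy = (q_xy)² at every point of Ω. -/
/-!
Write `a = q_x`, `b = q_y`, so that `a_y = b_x`. Differentiating (E2) in `y` gives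
`Sˣ_xy = 4 a a_y`; differentiating (E1) in `y` and subtracting (E3) differentiated in `x` gives
`Sˣ_yy = 4 a b_y`. The two resulting expressions for the third derivative `Sˣ_xyy` must agree:
`a_x b_y + a b_xy = a_y² + a a_yy`, and since `b_xy = a_yy` this is `q_xx q_yy = q_xy²`.
The computation uses only the product rule and the symmetry of second derivatives, so it runs along
any two directions `v, w` of a normed space; `px`, `py` are the line derivatives along `(1, 0)`
and `(0, 1)`.
-/

open Real Set

/-- Partial derivative in the first variable. -/
noncomputable def px (f : ℝ × ℝ → ℝ) : ℝ × ℝ → ℝ :=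
  fun p => deriv (fun t => f (t, p.2)) p.1

/-- Partial derivative in the second variable. -/
noncomputable def py (f : ℝ × ℝ → ℝ) : ℝ × ℝ → ℝ :=
  fun p => deriv (fun t => f (p.1, t)) p.2

open scoped ContDiff

section DirDeriv

variable {E F 𝔸 : Type*} [NormedAddCommGroup E] [NormedSpace ℝ E]
  [NormedAddCommGroup F] [NormedSpace ℝ F] [NormedCommRing 𝔸] [NormedAlgebra ℝ 𝔸]
  {Ω : Set E} {p v w : E}

noncomputable def dirDeriv (v : E) (f : E → F) : E → F :=
  fun p => lineDeriv ℝ f p v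

theorem DifferentiableAt.dirDeriv_eq_fderiv {f : E → F} (hf : DifferentiableAt ℝ f p) :
    dirDeriv v f p = fderiv ℝ f p v :=
  hf.lineDeriv_eq_fderiv

theorem Set.EqOn.dirDeriv {f g : E → F} (hΩ : IsOpen Ω) (h : EqOn f g Ω) :
    EqOn (dirDeriv v f) (dirDeriv v g) Ω :=
  fun _ hz => (Filter.eventuallyEq_of_mem (hΩ.mem_nhds hz) h).lineDeriv_eq

theorem dirDeriv_add {f g : E → F} (hf : DifferentiableAt ℝ f p) (hg : DifferentiableAt ℝ g p) :
    dirDeriv v (fun z => f z + g z) p = dirDeriv v f p + dirDeriv v g p := by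
  rw [(hf.fun_add hg).dirDeriv_eq_fderiv, hf.dirDeriv_eq_fderiv, hg.dirDeriv_eq_fderiv,
    fderiv_fun_add hf hg]
  rfl

theorem dirDeriv_mul {f g : E → 𝔸} (hf : DifferentiableAt ℝ f p) (hg : DifferentiableAt ℝ g p) :
    dirDeriv v (fun z => f z * g z) p = dirDeriv v f p * g p + f p * dirDeriv v g p := by
  rw [(hf.fun_mul hg).dirDeriv_eq_fderiv, hf.dirDeriv_eq_fderiv, hg.dirDeriv_eq_fderiv,
    fderiv_fun_mul hf hg]
  simp [add_comm, mul_comm]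

theorem dirDeriv_const_mul {f : E → 𝔸} (c : 𝔸) (hf : DifferentiableAt ℝ f p) :
    dirDeriv v (fun z => c * f z) p = c * dirDeriv v f p := by
  rw [(hf.const_mul c).dirDeriv_eq_fderiv, hf.dirDeriv_eq_fderiv, fderiv_const_mul hf]
  rfl

theorem dirDeriv_pow {f : E → 𝔸} (n : ℕ) (hf : DifferentiableAt ℝ f p) :
    dirDeriv v (fun z => f z ^ n) p = n * f p ^ (n - 1) * dirDeriv v f p := by
  rw [(hf.fun_pow n).dirDeriv_eq_fderiv, hf.dirDeriv_eq_fderiv, fderiv_fun_pow n hf]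
  simp [nsmul_eq_mul]

theorem ContDiffOn.differentiableAt_of_isOpen {f : E → F} (hf : ContDiffOn ℝ ∞ f Ω)
    (hΩ : IsOpen Ω) (hp : p ∈ Ω) : DifferentiableAt ℝ f p :=
  (hf.differentiableOn (by simp)).differentiableAt (hΩ.mem_nhds hp)

theorem contDiffOn_dirDeriv {f : E → F} (hΩ : IsOpen Ω) (hf : ContDiffOn ℝ ∞ f Ω) :
    ContDiffOn ℝ ∞ (dirDeriv v f) Ω :=
  (((contDiffOn_infty_iff_fderiv_of_isOpen hΩ).1 hf).2.clm_apply contDiffOn_const).congr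
    fun _ hz => (hf.differentiableAt_of_isOpen hΩ hz).dirDeriv_eq_fderiv

theorem dirDeriv_dirDeriv_eq_fderiv_fderiv {f : E → F} (hΩ : IsOpen Ω)
    (hf : ContDiffOn ℝ ∞ f Ω) (hp : p ∈ Ω) :
    dirDeriv w (dirDeriv v f) p = fderiv ℝ (fderiv ℝ f) p w v := by
  have hf' : DifferentiableAt ℝ (fderiv ℝ f) p :=
    ((contDiffOn_infty_iff_fderiv_of_isOpen hΩ).1 hf).2.differentiableAt_of_isOpen hΩ hp
  have hfv : EqOn (dirDeriv v f) (fun z => fderiv ℝ f z v) Ω := fun _ hz =>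
    (hf.differentiableAt_of_isOpen hΩ hz).dirDeriv_eq_fderiv
  rw [hfv.dirDeriv hΩ hp, (hf'.clm_apply (differentiableAt_const v)).dirDeriv_eq_fderiv,
    fderiv_clm_apply hf' (differentiableAt_const v)]
  simp

theorem dirDeriv_comm {f : E → F} (hΩ : IsOpen Ω) (hf : ContDiffOn ℝ ∞ f Ω) (hp : p ∈ Ω) :
    dirDeriv w (dirDeriv v f) p = dirDeriv v (dirDeriv w f) p := by
  rw [dirDeriv_dirDeriv_eq_fderiv_fderiv hΩ hf hp, dirDeriv_dirDeriv_eq_fderiv_fderiv hΩ hf hp]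
  exact (hf.contDiffAt (hΩ.mem_nhds hp)).isSymmSndFDerivAt (by simpa using ENat.LEInfty.out) w v

end DirDeriv

theorem px_eq_dirDeriv : px = dirDeriv (1, 0) := by
  funext f p
  have hline : (fun t : ℝ => f (p + t • ((1 : ℝ), (0 : ℝ)))) = fun t => f (t + p.1, p.2) := by
    funext t
    congr 1
    ext <;> simp [add_comm]
  simp only [px, dirDeriv, lineDeriv, hline]
  rw [deriv_comp_add_const (f := fun t => f (t, p.2)), zero_add]

theorem py_eq_dirDeriv : py = dirDeriv (0, 1) := by
  funext f p
  have hline : (fun t : ℝ => f (p + t • ((0 : ℝ), (1 : ℝ)))) = fun t => f (p.1, t + p.2) := by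
    funext t
    congr 1
    ext <;> simp [add_comm]
  simp only [py, dirDeriv, lineDeriv, hline]
  rw [deriv_comp_add_const (f := fun t => f (p.1, t)), zero_add]

section resolvents

variable {E : Type*} [NormedAddCommGroup E] [NormedSpace ℝ E] {Ω : Set E}
  {f g k q S T : E → ℝ} {p u v w : E}

theorem dirDeriv_of_eqOn_two_mul_sq (hΩ : IsOpen Ω) (hf : ContDiffOn ℝ ∞ f Ω)
    (hk : EqOn k (fun z => 2 * f z ^ 2) Ω) (hp : p ∈ Ω) :
    dirDeriv u k p = 4 * f p * dirDeriv u f p := by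
  have hfp := hf.differentiableAt_of_isOpen hΩ hp
  rw [hk.dirDeriv hΩ hp, dirDeriv_const_mul _ (hfp.fun_pow 2), dirDeriv_pow 2 hfp]
  ring

theorem dirDeriv_of_eqOn_four_mul_mul (hΩ : IsOpen Ω) (hf : ContDiffOn ℝ ∞ f Ω)
    (hg : ContDiffOn ℝ ∞ g Ω) (hk : EqOn k (fun z => 4 * f z * g z) Ω) (hp : p ∈ Ω) :
    dirDeriv u k p = 4 * (dirDeriv u f p * g p + f p * dirDeriv u g p) := by
  have hfp := hf.differentiableAt_of_isOpen hΩ hp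
  rw [hk.dirDeriv hΩ hp, dirDeriv_mul (hfp.const_mul 4) (hg.differentiableAt_of_isOpen hΩ hp),
    dirDeriv_const_mul _ hfp]
  ring

theorem eqOn_dirDeriv_dirDeriv_of_resolvent (hΩ : IsOpen Ω) (hq : ContDiffOn ℝ ∞ q Ω)
    (hS : ContDiffOn ℝ ∞ S Ω) (hT : ContDiffOn ℝ ∞ T Ω)
    (hE1 : ∀ p ∈ Ω, dirDeriv w S p + dirDeriv v T p = 4 * dirDeriv v q p * dirDeriv w q p)
    (hE3 : ∀ p ∈ Ω, dirDeriv w T p = 2 * dirDeriv w q p ^ 2) :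
    EqOn (dirDeriv w (dirDeriv w S))
      (fun z => 4 * dirDeriv v q z * dirDeriv w (dirDeriv w q) z) Ω := by
  intro p hp
  have ha := contDiffOn_dirDeriv (v := v) hΩ hq
  have hb := contDiffOn_dirDeriv (v := w) hΩ hq
  have hTwv : dirDeriv w (dirDeriv v T) p = 4 * dirDeriv w q p * dirDeriv w (dirDeriv v q) p := by
    rw [dirDeriv_comm hΩ hT hp, dirDeriv_of_eqOn_two_mul_sq hΩ hb hE3 hp, dirDeriv_comm hΩ hq hp]
  have hE1w : dirDeriv w (dirDeriv w S) p + dirDeriv w (dirDeriv v T) p =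
      4 * (dirDeriv w (dirDeriv v q) p * dirDeriv w q p +
        dirDeriv v q p * dirDeriv w (dirDeriv w q) p) := by
    rw [← dirDeriv_add ((contDiffOn_dirDeriv hΩ hS).differentiableAt_of_isOpen hΩ hp)
      ((contDiffOn_dirDeriv hΩ hT).differentiableAt_of_isOpen hΩ hp)]
    exact dirDeriv_of_eqOn_four_mul_mul hΩ ha hb hE1 hp
  linear_combination hE1w - hTwv

theorem monge_ampere_of_dirDeriv_resolvents (hΩ : IsOpen Ω) (hq : ContDiffOn ℝ ∞ q Ω)
    (hS : ContDiffOn ℝ ∞ S Ω) (hT : ContDiffOn ℝ ∞ T Ω)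
    (hE1 : ∀ p ∈ Ω, dirDeriv w S p + dirDeriv v T p = 4 * dirDeriv v q p * dirDeriv w q p)
    (hE2 : ∀ p ∈ Ω, dirDeriv v S p = 2 * dirDeriv v q p ^ 2)
    (hE3 : ∀ p ∈ Ω, dirDeriv w T p = 2 * dirDeriv w q p ^ 2) (hp : p ∈ Ω) :
    dirDeriv v (dirDeriv v q) p * dirDeriv w (dirDeriv w q) p =
      dirDeriv w (dirDeriv v q) p ^ 2 := by
  have ha := contDiffOn_dirDeriv (v := v) hΩ hq
  have hb := contDiffOn_dirDeriv (v := w) hΩ hq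
  have hSvw : EqOn (dirDeriv w (dirDeriv v S))
      (fun z => 4 * dirDeriv v q z * dirDeriv w (dirDeriv v q) z) Ω :=
    fun z hz => dirDeriv_of_eqOn_two_mul_sq hΩ ha hE2 hz
  have hSww := eqOn_dirDeriv_dirDeriv_of_resolvent hΩ hq hS hT hE1 hE3
  have hS_third : dirDeriv v (dirDeriv w (dirDeriv w S)) p =
      dirDeriv w (dirDeriv w (dirDeriv v S)) p := by
    rw [dirDeriv_comm hΩ (contDiffOn_dirDeriv hΩ hS) hp,
      Set.EqOn.dirDeriv hΩ (fun z hz => (dirDeriv_comm hΩ hS hz).symm) hp]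
  have hq_third : dirDeriv v (dirDeriv w (dirDeriv w q)) p =
      dirDeriv w (dirDeriv w (dirDeriv v q)) p := by
    rw [dirDeriv_comm hΩ hb hp,
      Set.EqOn.dirDeriv hΩ (fun z hz => (dirDeriv_comm hΩ hq hz).symm) hp]
  rw [dirDeriv_of_eqOn_four_mul_mul hΩ ha (contDiffOn_dirDeriv hΩ hb) hSww hp,
    dirDeriv_of_eqOn_four_mul_mul hΩ ha (contDiffOn_dirDeriv hΩ ha) hSvw hp, hq_third] at hS_third
  linear_combination hS_third / 4

end resolvents

/-- if smooth resolvents `Sx, Sy` satisfy (E1)–(E3) on an open set `Ω`,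
then `q` satisfies the degenerate homogeneous Monge–Ampère equation on `Ω`. -/
theorem monge_ampere_of_resolvents
    (Ω : Set (ℝ × ℝ)) (hΩ : IsOpen Ω)
    (q Sx Sy : ℝ × ℝ → ℝ)
    (hq : ContDiffOn ℝ (⊤ : ℕ∞) q Ω)
    (hSx : ContDiffOn ℝ (⊤ : ℕ∞) Sx Ω)
    (hSy : ContDiffOn ℝ (⊤ : ℕ∞) Sy Ω)
    (hE1 : ∀ p ∈ Ω, py Sx p + px Sy p = 4 * px q p * py q p)
    (hE2 : ∀ p ∈ Ω, px Sx p = 2 * (px q p) ^ 2)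
    (hE3 : ∀ p ∈ Ω, py Sy p = 2 * (py q p) ^ 2) :
    ∀ p ∈ Ω, px (px q) p * py (py q) p = (py (px q) p) ^ 2 := by
  simp only [px_eq_dirDeriv, py_eq_dirDeriv] at *
  exact fun p hp => monge_ampere_of_dirDeriv_resolvents hΩ hq hSx hSy hE1 hE2 hE3 hp
end

section
/- Let Ω ⊆ ℝ² be open and connected, let q : Ω → ℝ be smooth, and suppose (Sˣ, Sʸ) and (S̃ˣ, S̃ʸ) are two pairs of smooth functions on Ω, each satisfying the equations (E1) ∂_y Sˣ + ∂_x Sʸ = 4 q_x q_y, (E2) ∂_x Sˣ = 2 q_x², (E3) ∂_y Sʸ = 2 q_y² (with the same q). Then there exist constants C₀, C₁, C₂ ∈ ℝ such that S̃ˣ(x,y) = Sˣ(x,y) + C₀ y + C₁ and S̃ʸ(x,y) = Sʸ(x,y) − C₀ x + C₂ for all (x,y) ∈ Ω. -/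
open Real Set

/-!
The differences `u = S̃ˣ - Sˣ` and `w = S̃ʸ - Sʸ` satisfy `u_x = 0`, `w_y = 0` and
`u_y + w_x = 0`: `(u, w)` is a Killing field of the flat plane. On a small square `u` depends on
`y` alone and `w` on `x` alone, so `u_y = -w_x` is locally a function of `y` only and of `x` only,
hence constant, equal to some `C₀` on the connected set `Ω`. Then `u - C₀ y` and `w + C₀ x` have
vanishing gradient, so they are constant too.
-/

open Filter Topology Metric ContinuousLinearMap

theorem IsOpen.exists_eq_const_of_eventually_eq {E F : Type*} [NormedAddCommGroup E]
    [NormedSpace ℝ E] [NormedAddCommGroup F] [NormedSpace ℝ F] {s : Set E} {f : E → F}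
    (hs : IsOpen s) (hs' : IsPreconnected s) (hf : ∀ x ∈ s, ∀ᶠ y in 𝓝 x, f y = f x) :
    ∃ a, ∀ x ∈ s, f x = a := by
  have hd : ∀ x ∈ s, HasFDerivAt f (0 : E →L[ℝ] F) x := fun x hx =>
    (hasFDerivAt_const (f x) x).congr_of_eventuallyEq (hf x hx)
  exact hs.exists_is_const_of_fderiv_eq_zero hs'
    (fun x hx => (hd x hx).differentiableAt.differentiableWithinAt) fun x hx => (hd x hx).fderiv

section Partials

variable {f g : ℝ × ℝ → ℝ} {p : ℝ × ℝ}

theorem hasDerivAt_px (hf : DifferentiableAt ℝ f p) :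
    HasDerivAt (fun t => f (t, p.2)) (fderiv ℝ f p (1, 0)) p.1 :=
  hf.hasFDerivAt.comp_hasDerivAt_of_eq p.1
    ((hasDerivAt_id p.1).prodMk (hasDerivAt_const p.1 p.2)) rfl

theorem hasDerivAt_py (hf : DifferentiableAt ℝ f p) :
    HasDerivAt (fun t => f (p.1, t)) (fderiv ℝ f p (0, 1)) p.2 :=
  hf.hasFDerivAt.comp_hasDerivAt_of_eq p.2
    ((hasDerivAt_const p.2 p.1).prodMk (hasDerivAt_id p.2)) rfl

theorem px_eq_fderiv_apply (hf : DifferentiableAt ℝ f p) : px f p = fderiv ℝ f p (1, 0) :=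
  (hasDerivAt_px hf).deriv

theorem py_eq_fderiv_apply (hf : DifferentiableAt ℝ f p) : py f p = fderiv ℝ f p (0, 1) :=
  (hasDerivAt_py hf).deriv

theorem px_sub (hf : DifferentiableAt ℝ f p) (hg : DifferentiableAt ℝ g p) :
    px (fun q => f q - g q) p = px f p - px g p := by
  rw [px_eq_fderiv_apply (hf.fun_sub hg), px_eq_fderiv_apply hf, px_eq_fderiv_apply hg,
    fderiv_fun_sub hf hg, sub_apply]

theorem py_sub (hf : DifferentiableAt ℝ f p) (hg : DifferentiableAt ℝ g p) :
    py (fun q => f q - g q) p = py f p - py g p := by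
  rw [py_eq_fderiv_apply (hf.fun_sub hg), py_eq_fderiv_apply hf, py_eq_fderiv_apply hg,
    fderiv_fun_sub hf hg, sub_apply]

theorem fderiv_eq_px_smul_fst_add_py_smul_snd (hf : DifferentiableAt ℝ f p) :
    fderiv ℝ f p = px f p • fst ℝ ℝ ℝ + py f p • snd ℝ ℝ ℝ := by
  rw [px_eq_fderiv_apply hf, py_eq_fderiv_apply hf]
  ext <;> simp

end Partials

section Rectangle

variable {f : ℝ × ℝ → ℝ} {I J : Set ℝ} {x x' y y' : ℝ}

theorem apply_eq_of_px_eq_zero (hI : IsOpen I) (hI' : IsPreconnected I)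
    (hf : ∀ p ∈ I ×ˢ J, DifferentiableAt ℝ f p) (h0 : ∀ p ∈ I ×ˢ J, px f p = 0)
    (hx : x ∈ I) (hx' : x' ∈ I) (hy : y ∈ J) : f (x, y) = f (x', y) :=
  hI.is_const_of_deriv_eq_zero (f := fun t => f (t, y)) hI'
    (fun t ht => (hasDerivAt_px (hf (t, y) ⟨ht, hy⟩)).differentiableAt.differentiableWithinAt)
    (fun t ht => h0 (t, y) ⟨ht, hy⟩) hx hx'

theorem py_eq_of_px_eq_zero (hI : IsOpen I) (hI' : IsPreconnected I) (hJ : IsOpen J)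
    (hf : ∀ p ∈ I ×ˢ J, DifferentiableAt ℝ f p) (h0 : ∀ p ∈ I ×ˢ J, px f p = 0)
    (hx : x ∈ I) (hx' : x' ∈ I) (hy : y ∈ J) : py f (x, y) = py f (x', y) :=
  EventuallyEq.deriv_eq <| (hJ.eventually_mem hy).mono fun _ ht =>
    apply_eq_of_px_eq_zero hI hI' hf h0 hx hx' ht

theorem px_eq_of_py_eq_zero (hI : IsOpen I) (hJ : IsOpen J) (hJ' : IsPreconnected J)
    (hf : ∀ p ∈ I ×ˢ J, DifferentiableAt ℝ f p) (h0 : ∀ p ∈ I ×ˢ J, py f p = 0)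
    (hx : x ∈ I) (hy : y ∈ J) (hy' : y' ∈ J) : px f (x, y) = px f (x, y') :=
  -- `py (f ∘ Prod.swap) (y, x)` unfolds to `px f (x, y)`
  py_eq_of_px_eq_zero (f := f ∘ Prod.swap) hJ hJ' hI
    (fun p hp => (hf p.swap ⟨hp.2, hp.1⟩).comp p (differentiableAt_snd.prodMk differentiableAt_fst))
    (fun p hp => h0 p.swap ⟨hp.2, hp.1⟩) hy hy' hx

end Rectangle

section Killing

variable {Ω : Set (ℝ × ℝ)} {u w : ℝ × ℝ → ℝ}

theorem exists_py_eq_const (hΩ : IsOpen Ω) (hΩ' : IsPreconnected Ω)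
    (hu : ∀ p ∈ Ω, DifferentiableAt ℝ u p) (hw : ∀ p ∈ Ω, DifferentiableAt ℝ w p)
    (hux : ∀ p ∈ Ω, px u p = 0) (hwy : ∀ p ∈ Ω, py w p = 0)
    (huw : ∀ p ∈ Ω, py u p + px w p = 0) : ∃ C, ∀ p ∈ Ω, py u p = C := by
  refine hΩ.exists_eq_const_of_eventually_eq hΩ' fun ⟨x₀, y₀⟩ hp => ?_
  obtain ⟨ε, hε, hball⟩ := Metric.isOpen_iff.1 hΩ _ hp
  rw [← ball_prod_same] at hball
  have hx₀ : x₀ ∈ ball x₀ ε := mem_ball_self hε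
  have hy₀ : y₀ ∈ ball y₀ ε := mem_ball_self hε
  filter_upwards [ball_mem_nhds _ hε] with ⟨x, y⟩ hr
  rw [← ball_prod_same] at hr
  calc py u (x, y) = py u (x₀, y) :=
        py_eq_of_px_eq_zero isOpen_ball (convex_ball _ _).isPreconnected isOpen_ball
          (fun q hq => hu q (hball hq)) (fun q hq => hux q (hball hq)) hr.1 hx₀ hr.2
    _ = -px w (x₀, y) := by linarith [huw (x₀, y) (hball ⟨hx₀, hr.2⟩)]
    _ = -px w (x₀, y₀) := by
        rw [px_eq_of_py_eq_zero isOpen_ball isOpen_ball (convex_ball _ _).isPreconnected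
          (fun q hq => hw q (hball hq)) (fun q hq => hwy q (hball hq)) hx₀ hr.2 hy₀]
    _ = py u (x₀, y₀) := by linarith [huw _ hp]

theorem exists_eq_of_px_py_eq_const {f : ℝ × ℝ → ℝ} {a b : ℝ} (hΩ : IsOpen Ω)
    (hΩ' : IsPreconnected Ω) (hf : ∀ p ∈ Ω, DifferentiableAt ℝ f p)
    (hx : ∀ p ∈ Ω, px f p = a) (hy : ∀ p ∈ Ω, py f p = b) :
    ∃ c, ∀ p ∈ Ω, f p = a * p.1 + b * p.2 + c := by
  set L := a • fst ℝ ℝ ℝ + b • snd ℝ ℝ ℝ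
  obtain ⟨c, hc⟩ := hΩ.exists_eq_add_of_fderiv_eq hΩ'
    (fun p hp => (hf p hp).differentiableWithinAt) L.differentiable.differentiableOn
    fun p hp => by rw [fderiv_eq_px_smul_fst_add_py_smul_snd (hf p hp), hx p hp, hy p hp, L.fderiv]
  exact ⟨c, fun p hp => by simpa [L] using hc hp⟩

theorem exists_eq_rigid_motion (hΩ : IsOpen Ω) (hΩ' : IsPreconnected Ω)
    (hu : ∀ p ∈ Ω, DifferentiableAt ℝ u p) (hw : ∀ p ∈ Ω, DifferentiableAt ℝ w p)
    (hux : ∀ p ∈ Ω, px u p = 0) (hwy : ∀ p ∈ Ω, py w p = 0)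
    (huw : ∀ p ∈ Ω, py u p + px w p = 0) :
    ∃ C₀ C₁ C₂ : ℝ, ∀ p ∈ Ω, u p = C₀ * p.2 + C₁ ∧ w p = -C₀ * p.1 + C₂ := by
  obtain ⟨C₀, huy⟩ := exists_py_eq_const hΩ hΩ' hu hw hux hwy huw
  have hwx : ∀ p ∈ Ω, px w p = -C₀ := fun p hp => by linarith [huw p hp, huy p hp]
  obtain ⟨C₁, hC₁⟩ := exists_eq_of_px_py_eq_const hΩ hΩ' hu hux huy
  obtain ⟨C₂, hC₂⟩ := exists_eq_of_px_py_eq_const hΩ hΩ' hw hwx hwy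
  exact ⟨C₀, C₁, C₂, fun p hp => ⟨by simpa using hC₁ p hp, by simpa using hC₂ p hp⟩⟩

end Killing

theorem resolvents_unique_up_to_linear_general
    (Ω : Set (ℝ × ℝ)) (hΩ : IsOpen Ω) (hconn : IsConnected Ω)
    (q Sx Sy Sx' Sy' : ℝ × ℝ → ℝ)
    (hSx : ContDiffOn ℝ (⊤ : ℕ∞) Sx Ω)
    (hSy : ContDiffOn ℝ (⊤ : ℕ∞) Sy Ω)
    (hSx' : ContDiffOn ℝ (⊤ : ℕ∞) Sx' Ω)
    (hSy' : ContDiffOn ℝ (⊤ : ℕ∞) Sy' Ω)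
    (hE1 : ∀ p ∈ Ω, py Sx p + px Sy p = 4 * px q p * py q p)
    (hE2 : ∀ p ∈ Ω, px Sx p = 2 * (px q p) ^ 2)
    (hE3 : ∀ p ∈ Ω, py Sy p = 2 * (py q p) ^ 2)
    (hE1' : ∀ p ∈ Ω, py Sx' p + px Sy' p = 4 * px q p * py q p)
    (hE2' : ∀ p ∈ Ω, px Sx' p = 2 * (px q p) ^ 2)
    (hE3' : ∀ p ∈ Ω, py Sy' p = 2 * (py q p) ^ 2) :
    ∃ C₀ C₁ C₂ : ℝ, ∀ p ∈ Ω,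
      Sx' p = Sx p + C₀ * p.2 + C₁ ∧ Sy' p = Sy p - C₀ * p.1 + C₂ := by
  have hdiff {f : ℝ × ℝ → ℝ} (hf : ContDiffOn ℝ (⊤ : ℕ∞) f Ω) {p : ℝ × ℝ} (hp : p ∈ Ω) :
      DifferentiableAt ℝ f p :=
    (hf.contDiffAt (hΩ.mem_nhds hp)).differentiableAt (by simp)
  obtain ⟨C₀, C₁, C₂, h⟩ := exists_eq_rigid_motion (u := fun p => Sx' p - Sx p)
    (w := fun p => Sy' p - Sy p) hΩ hconn.isPreconnected
    (fun p hp => (hdiff hSx' hp).sub (hdiff hSx hp))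
    (fun p hp => (hdiff hSy' hp).sub (hdiff hSy hp))
    (fun p hp => by rw [px_sub (hdiff hSx' hp) (hdiff hSx hp), hE2' p hp, hE2 p hp, sub_self])
    (fun p hp => by rw [py_sub (hdiff hSy' hp) (hdiff hSy hp), hE3' p hp, hE3 p hp, sub_self])
    fun p hp => by
      rw [py_sub (hdiff hSx' hp) (hdiff hSx hp), px_sub (hdiff hSy' hp) (hdiff hSy hp)]
      linarith [hE1 p hp, hE1' p hp]
  exact ⟨C₀, C₁, C₂, fun p hp => ⟨by linarith [(h p hp).1], by linarith [(h p hp).2]⟩⟩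

/-- any two pairs of smooth resolvents for the same `q` on an open connected `Ω`
differ by `(C₀ y + C₁, −C₀ x + C₂)`. -/
theorem resolvents_unique_up_to_linear
    (Ω : Set (ℝ × ℝ)) (hΩ : IsOpen Ω) (hconn : IsConnected Ω)
    (q Sx Sy Sx' Sy' : ℝ × ℝ → ℝ)
    (hq : ContDiffOn ℝ (⊤ : ℕ∞) q Ω)
    (hSx : ContDiffOn ℝ (⊤ : ℕ∞) Sx Ω)
    (hSy : ContDiffOn ℝ (⊤ : ℕ∞) Sy Ω)
    (hSx' : ContDiffOn ℝ (⊤ : ℕ∞) Sx' Ω)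
    (hSy' : ContDiffOn ℝ (⊤ : ℕ∞) Sy' Ω)
    (hE1 : ∀ p ∈ Ω, py Sx p + px Sy p = 4 * px q p * py q p)
    (hE2 : ∀ p ∈ Ω, px Sx p = 2 * (px q p) ^ 2)
    (hE3 : ∀ p ∈ Ω, py Sy p = 2 * (py q p) ^ 2)
    (hE1' : ∀ p ∈ Ω, py Sx' p + px Sy' p = 4 * px q p * py q p)
    (hE2' : ∀ p ∈ Ω, px Sx' p = 2 * (px q p) ^ 2)
    (hE3' : ∀ p ∈ Ω, py Sy' p = 2 * (py q p) ^ 2) :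
    ∃ C₀ C₁ C₂ : ℝ, ∀ p ∈ Ω,
      Sx' p = Sx p + C₀ * p.2 + C₁ ∧ Sy' p = Sy p - C₀ * p.1 + C₂ :=
  resolvents_unique_up_to_linear_general Ω hΩ hconn q Sx Sy Sx' Sy' hSx hSy hSx' hSy' hE1 hE2 hE3
    hE1' hE2' hE3'
end

section
/- Let a₀, b₀ ∈ ℝ and let I ⊆ ℝ be an open interval on which a₀ + b₀ z² > 0. Then the function f(z) = √(a₀ + b₀ z²) solves the ODE (★_{a₀,b₀,λ}) on I with λ = −2 a₀ b₀. -/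
/-! For `f = √(a₀ + b₀ z²)` one has `f' = b₀ z / f`, `f'' = a₀ b₀ / f³` and
`f''' = -3 a₀ b₀² z / f⁵`. Positivity of `a₀ + b₀ z²` is an open condition, so each formula holds
near the point and can be differentiated once more.
Substituting into (★) and eliminating `a₀ = f² - b₀ z²` leaves a rational identity. -/

open Real Set

/-- The ODE (★_{a₀,b₀,λ}) for the profile function `f` of a conformally cylindrical
Ricci soliton, at the point `z`. -/
def starODE (a₀ b₀ lam : ℝ) (f : ℝ → ℝ) (z : ℝ) : Prop :=
  0 = -3 * (a₀ * (deriv f z) ^ 2 + b₀ * (f z - z * deriv f z) ^ 2) ^ 2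
      - lam * (a₀ * (deriv f z) ^ 2 + b₀ * (f z - z * deriv f z) ^ 2)
      + (4 * a₀ - b₀ * z ^ 2) * b₀ * (f z) ^ 3 * deriv (deriv f) z
      + (a₀ + b₀ * z ^ 2) ^ 2 * f z * deriv (deriv f) z
          * ((deriv f z) ^ 2 - f z * deriv (deriv f) z)
      + lam * (a₀ + b₀ * z ^ 2) * f z * deriv (deriv f) z
      - (a₀ + b₀ * z ^ 2) * (b₀ * z * f z - (a₀ + b₀ * z ^ 2) * deriv f z)
          * (f z) ^ 2 * deriv (deriv (deriv f)) z

open Filter Topology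

section SqrtQuadratic

variable {a₀ b₀ z : ℝ}

lemma isOpen_setOf_quadratic_pos (a₀ b₀ : ℝ) : IsOpen {t : ℝ | 0 < a₀ + b₀ * t ^ 2} :=
  isOpen_lt continuous_const (by fun_prop)

lemma hasDerivAt_sqrt_quadratic (h : 0 < a₀ + b₀ * z ^ 2) :
    HasDerivAt (fun t => √(a₀ + b₀ * t ^ 2)) (b₀ * z / √(a₀ + b₀ * z ^ 2)) z := by
  have hq : HasDerivAt (fun t : ℝ => a₀ + b₀ * t ^ 2) (b₀ * (2 * z)) z := by
    simpa using ((hasDerivAt_pow 2 z).const_mul b₀).const_add a₀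
  refine ((hasDerivAt_sqrt h.ne').comp z hq).congr_deriv ?_
  have : 0 < √(a₀ + b₀ * z ^ 2) := sqrt_pos.2 h
  field_simp

lemma hasDerivAt_deriv_sqrt_quadratic (h : 0 < a₀ + b₀ * z ^ 2) :
    HasDerivAt (fun t => b₀ * t / √(a₀ + b₀ * t ^ 2)) (a₀ * b₀ / √(a₀ + b₀ * z ^ 2) ^ 3) z := by
  have hr : 0 < √(a₀ + b₀ * z ^ 2) := sqrt_pos.2 h
  have hr2 : √(a₀ + b₀ * z ^ 2) ^ 2 = a₀ + b₀ * z ^ 2 := sq_sqrt h.le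
  refine (((hasDerivAt_id' z).const_mul b₀).div (hasDerivAt_sqrt_quadratic h)
    hr.ne').congr_deriv ?_
  generalize √(a₀ + b₀ * z ^ 2) = r at hr hr2 ⊢
  obtain rfl : a₀ = r ^ 2 - b₀ * z ^ 2 := by linarith
  field_simp

lemma hasDerivAt_deriv_deriv_sqrt_quadratic (h : 0 < a₀ + b₀ * z ^ 2) :
    HasDerivAt (fun t => a₀ * b₀ / √(a₀ + b₀ * t ^ 2) ^ 3)
      (-3 * a₀ * b₀ ^ 2 * z / √(a₀ + b₀ * z ^ 2) ^ 5) z := by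
  have hr : 0 < √(a₀ + b₀ * z ^ 2) := sqrt_pos.2 h
  refine ((hasDerivAt_const z (a₀ * b₀)).div ((hasDerivAt_sqrt_quadratic h).fun_pow 3)
    (by positivity)).congr_deriv ?_
  field_simp
  ring

lemma deriv_sqrt_quadratic (h : 0 < a₀ + b₀ * z ^ 2) :
    deriv (fun t => √(a₀ + b₀ * t ^ 2)) z = b₀ * z / √(a₀ + b₀ * z ^ 2) :=
  (hasDerivAt_sqrt_quadratic h).deriv

lemma deriv_deriv_sqrt_quadratic (h : 0 < a₀ + b₀ * z ^ 2) :
    deriv (deriv fun t => √(a₀ + b₀ * t ^ 2)) z = a₀ * b₀ / √(a₀ + b₀ * z ^ 2) ^ 3 := by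
  have hnear : deriv (fun t => √(a₀ + b₀ * t ^ 2)) =ᶠ[𝓝 z]
      fun t => b₀ * t / √(a₀ + b₀ * t ^ 2) := by
    filter_upwards [(isOpen_setOf_quadratic_pos a₀ b₀).mem_nhds h] with t ht
      using deriv_sqrt_quadratic ht
  rw [hnear.deriv_eq]
  exact (hasDerivAt_deriv_sqrt_quadratic h).deriv

lemma deriv_deriv_deriv_sqrt_quadratic (h : 0 < a₀ + b₀ * z ^ 2) :
    deriv (deriv (deriv fun t => √(a₀ + b₀ * t ^ 2))) z
      = -3 * a₀ * b₀ ^ 2 * z / √(a₀ + b₀ * z ^ 2) ^ 5 := by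
  have hnear : deriv (deriv fun t => √(a₀ + b₀ * t ^ 2)) =ᶠ[𝓝 z]
      fun t => a₀ * b₀ / √(a₀ + b₀ * t ^ 2) ^ 3 := by
    filter_upwards [(isOpen_setOf_quadratic_pos a₀ b₀).mem_nhds h] with t ht
      using deriv_deriv_sqrt_quadratic ht
  rw [hnear.deriv_eq]
  exact (hasDerivAt_deriv_deriv_sqrt_quadratic h).deriv

end SqrtQuadratic

lemma starODE_of_derivs {a₀ b₀ z r : ℝ} {f : ℝ → ℝ} (hr : r ≠ 0) (hr2 : r ^ 2 = a₀ + b₀ * z ^ 2)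
    (hf : f z = r) (hf' : deriv f z = b₀ * z / r) (hf'' : deriv (deriv f) z = a₀ * b₀ / r ^ 3)
    (hf''' : deriv (deriv (deriv f)) z = -3 * a₀ * b₀ ^ 2 * z / r ^ 5) :
    starODE a₀ b₀ (-2 * a₀ * b₀) f z := by
  unfold starODE
  rw [hf, hf', hf'', hf''']
  obtain rfl : a₀ = r ^ 2 - b₀ * z ^ 2 := by linarith
  field_simp
  ring

lemma starODE_sqrt_quadratic {a₀ b₀ z : ℝ} (h : 0 < a₀ + b₀ * z ^ 2) :
    starODE a₀ b₀ (-2 * a₀ * b₀) (fun t => √(a₀ + b₀ * t ^ 2)) z :=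
  starODE_of_derivs (sqrt_pos.2 h).ne' (sq_sqrt h.le) rfl (deriv_sqrt_quadratic h)
    (deriv_deriv_sqrt_quadratic h) (deriv_deriv_deriv_sqrt_quadratic h)

theorem sqrt_solves_starODE_general
    (a₀ b₀ : ℝ) (I : Set ℝ)
    (hpos : ∀ z ∈ I, 0 < a₀ + b₀ * z ^ 2) :
    ∀ z ∈ I, starODE a₀ b₀ (-2 * a₀ * b₀) (fun t => Real.sqrt (a₀ + b₀ * t ^ 2)) z :=
  fun z hz => starODE_sqrt_quadratic (hpos z hz)

/-- `f(z) = √(a₀ + b₀ z²)` solves (★_{a₀,b₀,λ}) with `λ = −2a₀b₀` on any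
open interval where `a₀ + b₀ z² > 0`. -/
theorem sqrt_solves_starODE
    (a₀ b₀ : ℝ) (I : Set ℝ) (hI : IsOpen I) (hconv : Convex ℝ I)
    (hpos : ∀ z ∈ I, 0 < a₀ + b₀ * z ^ 2) :
    ∀ z ∈ I, starODE a₀ b₀ (-2 * a₀ * b₀) (fun t => Real.sqrt (a₀ + b₀ * t ^ 2)) z :=
  sqrt_solves_starODE_general a₀ b₀ I hpos
end

section
/- On the open quadrant Ω = {(x,y) ∈ ℝ² : x > 0, y > 0}, the data q(x,y) = √(x+y), A(x) = x, B(y) = y, Sˣ(x,y) = Sʸ(x,y) = (1/2)·log(x+y), and λ = 1/2 satisfies the full reduced soliton system: (E1) ∂_y Sˣ + ∂_x Sʸ = 4 q_x q_y; (E2) ∂_x Sˣ = 2 q_x²; (E3) ∂_y Sʸ = 2 q_y²; (E4) A''(x) − (Sˣ/q²) A'(x) = B''(y) − (Sʸ/q²) B'(y) (common value denoted w); (E5) −λ/q² = (1/2) w − (q_x A' + q_xx A + q_y B' + q_yy B)/q + (q_x² A + q_y² B)/q² + (Sˣ q_x A + Sʸ q_y B)/q³. -/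
open Real Set

/-!
Every datum is a function of `u = x + y` alone, so both partial derivatives of each of them are
the ordinary `u`-derivative (for `√`, at second order too). Since `A` and `B` are the identity,
`w = -Sˣ/q²`, and after writing `x + y = s²` with `s = √(x + y)` all five equations become
rational identities in `s`, `x` and `log (x + y)`.
-/

theorem px_comp_add (g : ℝ → ℝ) :
    px (fun p => g (p.1 + p.2)) = fun p => deriv g (p.1 + p.2) :=
  funext fun p => deriv_comp_add_const g p.2 p.1

theorem py_comp_add (g : ℝ → ℝ) :
    py (fun p => g (p.1 + p.2)) = fun p => deriv g (p.1 + p.2) :=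
  funext fun p => deriv_comp_const_add g p.1 p.2

theorem px_eq_of_forall_eq_comp_add {f : ℝ × ℝ → ℝ} (g : ℝ → ℝ)
    (hf : ∀ p, f p = g (p.1 + p.2)) : px f = fun p => deriv g (p.1 + p.2) := by
  rw [funext hf, px_comp_add]

theorem py_eq_of_forall_eq_comp_add {f : ℝ × ℝ → ℝ} (g : ℝ → ℝ)
    (hf : ∀ p, f p = g (p.1 + p.2)) : py f = fun p => deriv g (p.1 + p.2) := by
  rw [funext hf, py_comp_add]

theorem deriv_sqrt_of_ne_zero {u : ℝ} (hu : u ≠ 0) : deriv (√·) u = 1 / (2 * √u) :=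
  (hasDerivAt_sqrt hu).deriv

theorem deriv_deriv_sqrt_of_pos {u : ℝ} (hu : 0 < u) :
    deriv (deriv (√·)) u = -(1 / (4 * u * √u)) := by
  have hnear : deriv (√·) =ᶠ[nhds u] fun v => (2 * √v)⁻¹ :=
    (lt_mem_nhds hu).mono fun v hv => (deriv_sqrt_of_ne_zero hv.ne').trans (one_div _)
  have hderiv : HasDerivAt (fun v => (2 * √v)⁻¹) (-(1 / (4 * u * √u))) u := by
    refine (((hasDerivAt_sqrt hu.ne').const_mul 2).fun_inv (by positivity)).congr_deriv ?_
    field_simp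
    rw [sq_sqrt hu.le]; ring
  rw [hnear.deriv_eq, hderiv.deriv]

theorem deriv_half_log (u : ℝ) : deriv (fun v => 1 / 2 * log v) u = 1 / (2 * u) := by
  simp only [deriv_const_mul_field', deriv_log]; ring

/-- the data `q = √(x+y)`, `A(x) = x`, `B(y) = y`,
`Sˣ = Sʸ = (1/2) log(x+y)`, `λ = 1/2` satisfies the full reduced soliton system on the
open quadrant `{x > 0, y > 0}`. -/
theorem singular_shrinker_q_sqrt_x_plus_y
    (q Sx Sy : ℝ × ℝ → ℝ) (A B : ℝ → ℝ) (lam : ℝ)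
    (hq : ∀ p : ℝ × ℝ, q p = Real.sqrt (p.1 + p.2))
    (hA : ∀ x : ℝ, A x = x)
    (hB : ∀ y : ℝ, B y = y)
    (hSx : ∀ p : ℝ × ℝ, Sx p = (1 / 2) * Real.log (p.1 + p.2))
    (hSy : ∀ p : ℝ × ℝ, Sy p = (1 / 2) * Real.log (p.1 + p.2))
    (hlam : lam = 1 / 2) :
    ∀ p : ℝ × ℝ, 0 < p.1 → 0 < p.2 →
      (py Sx p + px Sy p = 4 * px q p * py q p) ∧
      (px Sx p = 2 * (px q p) ^ 2) ∧
      (py Sy p = 2 * (py q p) ^ 2) ∧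
      (deriv (deriv A) p.1 - Sx p / (q p) ^ 2 * deriv A p.1 =
        deriv (deriv B) p.2 - Sy p / (q p) ^ 2 * deriv B p.2) ∧
      (-(lam / (q p) ^ 2) =
        (1 / 2) * (deriv (deriv A) p.1 - Sx p / (q p) ^ 2 * deriv A p.1)
        - (px q p * deriv A p.1 + px (px q) p * A p.1
            + py q p * deriv B p.2 + py (py q) p * B p.2) / q p
        + ((px q p) ^ 2 * A p.1 + (py q p) ^ 2 * B p.2) / (q p) ^ 2
        + (Sx p * px q p * A p.1 + Sy p * py q p * B p.2) / (q p) ^ 3) := by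
  rintro ⟨x, y⟩ hx hy
  have hu : 0 < x + y := add_pos hx hy
  have hS : ∀ f : ℝ × ℝ → ℝ, (∀ p, f p = 1 / 2 * log (p.1 + p.2)) →
      px f = (fun p => 1 / (2 * (p.1 + p.2))) ∧ py f = (fun p => 1 / (2 * (p.1 + p.2))) :=
    fun f hf => by
      simp only [px_eq_of_forall_eq_comp_add (fun u => 1 / 2 * log u) hf,
        py_eq_of_forall_eq_comp_add (fun u => 1 / 2 * log u) hf, deriv_half_log, and_self]
  rw [(hS Sx hSx).1, (hS Sx hSx).2, (hS Sy hSy).1, (hS Sy hSy).2,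
    px_eq_of_forall_eq_comp_add (√·) hq, py_eq_of_forall_eq_comp_add (√·) hq,
    px_comp_add, py_comp_add, funext hA, funext hB, hlam]
  simp only [hq, hSx, hSy, deriv_sqrt_of_ne_zero hu.ne', deriv_deriv_sqrt_of_pos hu, deriv_id'',
    deriv_const']
  have hs : 0 < √(x + y) := sqrt_pos.mpr hu
  have hss : √(x + y) ^ 2 = x + y := sq_sqrt hu.le
  generalize √(x + y) = s at hs hss ⊢
  generalize log (x + y) = L
  obtain rfl : y = s ^ 2 - x := by linarith
  refine ⟨?_, ?_, ?_, trivial, ?_⟩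
  all_goals field_simp
  all_goals ring
end

section
/- For any real constants k₀, k₁, k₂, on all of Ω = ℝ², the data q(x,y) = e^{x+y}, A(x) = k₁ e^x + k₀, B(y) = k₂ e^y − k₀, Sˣ(x,y) = Sʸ(x,y) = e^{2(x+y)}, and λ = 0 satisfies the full reduced soliton system: (E1) ∂_y Sˣ + ∂_x Sʸ = 4 q_x q_y; (E2) ∂_x Sˣ = 2 q_x²; (E3) ∂_y Sʸ = 2 q_y²; (E4) A''(x) − (Sˣ/q²) A'(x) = B''(y) − (Sʸ/q²) B'(y) (common value denoted w); (E5) −λ/q² = (1/2) w − (q_x A' + q_xx A + q_y B' + q_yy B)/q + (q_x² A + q_y² B)/q² + (Sˣ q_x A + Sʸ q_y B)/q³. -/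
open Real Set

theorem deriv_exp_const_mul (c : ℝ) :
    deriv (fun s => exp (c * s)) = fun s => c * exp (c * s) := by
  simpa using iteratedDeriv_exp_const_mul 1 c

/-- the data `q = e^{x+y}`, `A(x) = k₁eˣ + k₀`, `B(y) = k₂e^y − k₀`,
`Sˣ = Sʸ = e^{2(x+y)}`, `λ = 0` satisfies the full reduced soliton system on all of ℝ². -/
theorem steady_soliton_conformal_product_of_cigars
    (k₀ k₁ k₂ : ℝ)
    (q Sx Sy : ℝ × ℝ → ℝ) (A B : ℝ → ℝ) (lam : ℝ)
    (hq : ∀ p : ℝ × ℝ, q p = Real.exp (p.1 + p.2))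
    (hA : ∀ x : ℝ, A x = k₁ * Real.exp x + k₀)
    (hB : ∀ y : ℝ, B y = k₂ * Real.exp y - k₀)
    (hSx : ∀ p : ℝ × ℝ, Sx p = Real.exp (2 * (p.1 + p.2)))
    (hSy : ∀ p : ℝ × ℝ, Sy p = Real.exp (2 * (p.1 + p.2)))
    (hlam : lam = 0) :
    ∀ p : ℝ × ℝ,
      (py Sx p + px Sy p = 4 * px q p * py q p) ∧
      (px Sx p = 2 * (px q p) ^ 2) ∧
      (py Sy p = 2 * (py q p) ^ 2) ∧
      (deriv (deriv A) p.1 - Sx p / (q p) ^ 2 * deriv A p.1 =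
        deriv (deriv B) p.2 - Sy p / (q p) ^ 2 * deriv B p.2) ∧
      (-(lam / (q p) ^ 2) =
        (1 / 2) * (deriv (deriv A) p.1 - Sx p / (q p) ^ 2 * deriv A p.1)
        - (px q p * deriv A p.1 + px (px q) p * A p.1
            + py q p * deriv B p.2 + py (py q) p * B p.2) / q p
        + ((px q p) ^ 2 * A p.1 + (py q p) ^ 2 * B p.2) / (q p) ^ 2
        + (Sx p * px q p * A p.1 + Sy p * py q p * B p.2) / (q p) ^ 3) := by
  obtain rfl : q = fun p => exp (p.1 + p.2) := funext hq
  obtain rfl : Sx = fun p => exp (2 * (p.1 + p.2)) := funext hSx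
  obtain rfl : Sy = fun p => exp (2 * (p.1 + p.2)) := funext hSy
  obtain rfl : A = fun x => k₁ * exp x + k₀ := funext hA
  obtain rfl : B = fun y => k₂ * exp y - k₀ := funext hB
  subst hlam
  intro p
  simp only [px_comp_add exp, py_comp_add exp, px_comp_add (fun s => exp (2 * s)),
    py_comp_add (fun s => exp (2 * s)), Real.deriv_exp, deriv_exp_const_mul]
  have hS : exp (2 * (p.1 + p.2)) = exp (p.1 + p.2) ^ 2 := by rw [two_mul, exp_add, sq]
  have hSq : exp (2 * (p.1 + p.2)) / exp (p.1 + p.2) ^ 2 = 1 := by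
    rw [hS, div_self (by positivity)]
  have hA' : deriv (fun x => k₁ * exp x + k₀) = fun x => k₁ * exp x := by simp
  have hB' : deriv (fun y => k₂ * exp y - k₀) = fun y => k₂ * exp y := by simp
  have hderiv_mul_exp (k : ℝ) : deriv (fun x => k * exp x) = fun x => k * exp x := by simp
  simp only [hA', hB', hderiv_mul_exp, hSq]
  refine ⟨by rw [hS]; ring, by rw [hS], by rw [hS], by ring, ?_⟩
  rw [hS, exp_add]
  field_simp
  ring
end

section
/- Let α ∈ ℝ with α ≠ 1/2, set μ_α = 2α²/(2α−1) and μ_{1−α} = 2(1−α)²/(1−2α), and let c, k₁, k₂ ∈ ℝ. On the open quadrant Ω = {(x,y) ∈ ℝ² : x > 0, y > 0}, the data q(x,y) = x^α y^{1−α}, A(x) = c x² + k₁ x^{μ_α + 1}, B(y) = −c y² + k₂ y^{μ_{1−α} + 1}, Sˣ(x,y) = μ_α q(x,y)²/x, Sʸ(x,y) = μ_{1−α} q(x,y)²/y, and λ = 0 satisfies the full reduced soliton system: (E1) ∂_y Sˣ + ∂_x Sʸ = 4 q_x q_y; (E2) ∂_x Sˣ = 2 q_x²; (E3) ∂_y Sʸ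 = 2 q_y²; (E4) A''(x) − (Sˣ/q²) A'(x) = B''(y) − (Sʸ/q²) B'(y) (common value denoted w); (E5) −λ/q² = (1/2) w − (q_x A' + q_xx A + q_y B' + q_yy B)/q + (q_x² A + q_y² B)/q² + (Sˣ q_x A + Sʸ q_y B)/q³. -/
/-!
On the open quadrant `q`, `Sˣ` and `Sʸ` are monomials `C x^r y^s`, whose partial derivatives are
`r/x` and `s/y` times themselves; (E1)–(E3) then reduce to `μ_α (2α - 1) = 2α²`, its analogue for
`1 - α`, and `μ_α + μ_{1-α} = 2`. For `A = c x² + k x^{μ+1}` the power `x^{μ+1}` is annihilated by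
both `x f'' - μ f'` and the Euler operator `x f' - (μ + 1) f`, so each side of (E4) equals
`2c(1 - μ_α)`, and (E5) is a combination of these two identities for `A` and for `B`.
-/

open Real Set

section Profile

variable {A : ℝ → ℝ} {c k μ x : ℝ}

lemma deriv_of_eq_quad_add_rpow (hA : ∀ x, 0 < x → A x = c * x ^ 2 + k * x ^ (μ + 1))
    (hx : 0 < x) : deriv A x = 2 * c * x + k * (μ + 1) * x ^ μ := by
  have hA' : A =ᶠ[nhds x] fun t => c * t ^ 2 + k * t ^ (μ + 1) := by
    filter_upwards [eventually_gt_nhds hx] with t ht using hA t ht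
  rw [hA'.deriv_eq]
  refine (((hasDerivAt_pow 2 x).const_mul c).add
    ((hasDerivAt_rpow_const (p := μ + 1) (Or.inl hx.ne')).const_mul k)).deriv.trans ?_
  simp only [add_sub_cancel_right]
  push_cast
  ring

lemma deriv_deriv_of_eq_quad_add_rpow (hA : ∀ x, 0 < x → A x = c * x ^ 2 + k * x ^ (μ + 1))
    (hx : 0 < x) : deriv (deriv A) x = 2 * c + k * (μ + 1) * μ * x ^ (μ - 1) := by
  have hA' : deriv A =ᶠ[nhds x] fun t => 2 * c * t + k * (μ + 1) * t ^ μ := by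
    filter_upwards [eventually_gt_nhds hx] with t ht using deriv_of_eq_quad_add_rpow hA ht
  rw [hA'.deriv_eq]
  refine (((hasDerivAt_id x).const_mul (2 * c)).add
    ((hasDerivAt_rpow_const (p := μ) (Or.inl hx.ne')).const_mul (k * (μ + 1)))).deriv.trans ?_
  ring

lemma mul_deriv_deriv_sub_of_eq_quad_add_rpow
    (hA : ∀ x, 0 < x → A x = c * x ^ 2 + k * x ^ (μ + 1)) (hx : 0 < x) :
    x * deriv (deriv A) x - μ * deriv A x = 2 * c * (1 - μ) * x := by
  rw [deriv_deriv_of_eq_quad_add_rpow hA hx, deriv_of_eq_quad_add_rpow hA hx,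
    rpow_sub_one hx.ne']
  field_simp
  ring

lemma mul_deriv_sub_of_eq_quad_add_rpow
    (hA : ∀ x, 0 < x → A x = c * x ^ 2 + k * x ^ (μ + 1)) (hx : 0 < x) :
    x * deriv A x - (μ + 1) * A x = c * (1 - μ) * x ^ 2 := by
  rw [deriv_of_eq_quad_add_rpow hA hx, hA x hx, rpow_add_one hx.ne']
  ring

end Profile

def quadrant : Set (ℝ × ℝ) := Ioi 0 ×ˢ Ioi 0

noncomputable def rpowMonomial (C r s : ℝ) (p : ℝ × ℝ) : ℝ := C * p.1 ^ r * p.2 ^ s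

section Monomial

variable {f : ℝ × ℝ → ℝ} {C r s : ℝ} {p : ℝ × ℝ}

lemma px_congr {g : ℝ × ℝ → ℝ} (h : EqOn f g quadrant) (hp : p ∈ quadrant) :
    px f p = px g p := by
  refine Filter.EventuallyEq.deriv_eq ?_
  filter_upwards [eventually_gt_nhds hp.1] with t ht using h ⟨ht, hp.2⟩

lemma py_congr {g : ℝ × ℝ → ℝ} (h : EqOn f g quadrant) (hp : p ∈ quadrant) :
    py f p = py g p := by
  refine Filter.EventuallyEq.deriv_eq ?_
  filter_upwards [eventually_gt_nhds hp.2] with t ht using h ⟨hp.1, ht⟩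

lemma px_rpowMonomial (hp : 0 < p.1) :
    px (rpowMonomial C r s) p = rpowMonomial (C * r) (r - 1) s p := by
  refine (((hasDerivAt_rpow_const (Or.inl hp.ne')).const_mul C).mul_const (p.2 ^ s)).deriv.trans ?_
  simp only [rpowMonomial]
  ring

lemma py_rpowMonomial (hp : 0 < p.2) :
    py (rpowMonomial C r s) p = rpowMonomial (C * s) r (s - 1) p := by
  refine ((hasDerivAt_rpow_const (Or.inl hp.ne')).const_mul (C * p.1 ^ r)).deriv.trans ?_
  simp only [rpowMonomial]
  ring

lemma rpowMonomial_mul_sub_one_fst (hp : 0 < p.1) :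
    rpowMonomial (C * r) (r - 1) s p = r * rpowMonomial C r s p / p.1 := by
  simp only [rpowMonomial, rpow_sub_one hp.ne']
  field_simp

lemma rpowMonomial_mul_sub_one_snd (hp : 0 < p.2) :
    rpowMonomial (C * s) r (s - 1) p = s * rpowMonomial C r s p / p.2 := by
  simp only [rpowMonomial, rpow_sub_one hp.ne']
  field_simp

lemma Set.EqOn.px_rpowMonomial (h : EqOn f (rpowMonomial C r s) quadrant) :
    EqOn (px f) (rpowMonomial (C * r) (r - 1) s) quadrant := fun _ hp =>
  (px_congr h hp).trans (_root_.px_rpowMonomial hp.1)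

lemma Set.EqOn.py_rpowMonomial (h : EqOn f (rpowMonomial C r s) quadrant) :
    EqOn (py f) (rpowMonomial (C * s) r (s - 1)) quadrant := fun _ hp =>
  (py_congr h hp).trans (_root_.py_rpowMonomial hp.2)

lemma px_eq_of_eqOn_rpowMonomial (h : EqOn f (rpowMonomial C r s) quadrant)
    (hp : p ∈ quadrant) : px f p = r * f p / p.1 := by
  rw [h.px_rpowMonomial hp, rpowMonomial_mul_sub_one_fst hp.1, h hp]

lemma py_eq_of_eqOn_rpowMonomial (h : EqOn f (rpowMonomial C r s) quadrant)
    (hp : p ∈ quadrant) : py f p = s * f p / p.2 := by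
  rw [h.py_rpowMonomial hp, rpowMonomial_mul_sub_one_snd hp.2, h hp]

lemma px_px_eq_of_eqOn_rpowMonomial (h : EqOn f (rpowMonomial C r s) quadrant)
    (hp : p ∈ quadrant) : px (px f) p = r * (r - 1) * f p / p.1 ^ 2 := by
  rw [px_eq_of_eqOn_rpowMonomial h.px_rpowMonomial hp, h.px_rpowMonomial hp,
    rpowMonomial_mul_sub_one_fst hp.1, h hp]
  field_simp

lemma py_py_eq_of_eqOn_rpowMonomial (h : EqOn f (rpowMonomial C r s) quadrant)
    (hp : p ∈ quadrant) : py (py f) p = s * (s - 1) * f p / p.2 ^ 2 := by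
  rw [py_eq_of_eqOn_rpowMonomial h.py_rpowMonomial hp, h.py_rpowMonomial hp,
    rpowMonomial_mul_sub_one_snd hp.2, h hp]
  field_simp

lemma mul_rpowMonomial_sq_div_fst (hp : p ∈ quadrant) :
    C * rpowMonomial 1 r s p ^ 2 / p.1 = rpowMonomial C (2 * r - 1) (2 * s) p := by
  rw [rpowMonomial, rpowMonomial, rpow_sub_one hp.1.ne', mul_comm 2 r, mul_comm 2 s,
    rpow_mul hp.1.le, rpow_mul hp.2.le, rpow_two, rpow_two]
  ring

lemma mul_rpowMonomial_sq_div_snd (hp : p ∈ quadrant) :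
    C * rpowMonomial 1 r s p ^ 2 / p.2 = rpowMonomial C (2 * r) (2 * s - 1) p := by
  rw [rpowMonomial, rpowMonomial, rpow_sub_one hp.2.ne', mul_comm 2 r, mul_comm 2 s,
    rpow_mul hp.1.le, rpow_mul hp.2.le, rpow_two, rpow_two]
  ring

end Monomial

lemma two_sq_div_add_two_sq_div_eq_two {α : ℝ} (hα : α ≠ 1 / 2) :
    2 * α ^ 2 / (2 * α - 1) + 2 * (1 - α) ^ 2 / (1 - 2 * α) = 2 := by
  have h₁ : 2 * α - 1 ≠ 0 := by contrapose! hα; linarith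
  have h₂ : 1 - 2 * α ≠ 0 := by contrapose! hα; linarith
  field_simp
  ring

/-- the three-parameter family of singular steady solitons with
`q = x^α y^{1−α}`, `A = c x² + k₁ x^{μ_α+1}`, `B = −c y² + k₂ y^{μ_{1−α}+1}`,
`Sˣ = μ_α q²/x`, `Sʸ = μ_{1−α} q²/y`, `λ = 0` satisfies the full reduced soliton
system on the open quadrant. -/
theorem singular_steady_soliton_family
    (α c k₁ k₂ : ℝ) (hα : α ≠ 1 / 2)
    (μα μ1α : ℝ)
    (hμα : μα = 2 * α ^ 2 / (2 * α - 1))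
    (hμ1α : μ1α = 2 * (1 - α) ^ 2 / (1 - 2 * α))
    (q Sx Sy : ℝ × ℝ → ℝ) (A B : ℝ → ℝ) (lam : ℝ)
    (hq : ∀ p : ℝ × ℝ, 0 < p.1 → 0 < p.2 → q p = p.1 ^ α * p.2 ^ (1 - α))
    (hA : ∀ x : ℝ, 0 < x → A x = c * x ^ 2 + k₁ * x ^ (μα + 1))
    (hB : ∀ y : ℝ, 0 < y → B y = -c * y ^ 2 + k₂ * y ^ (μ1α + 1))
    (hSx : ∀ p : ℝ × ℝ, 0 < p.1 → 0 < p.2 → Sx p = μα * (q p) ^ 2 / p.1)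
    (hSy : ∀ p : ℝ × ℝ, 0 < p.1 → 0 < p.2 → Sy p = μ1α * (q p) ^ 2 / p.2)
    (hlam : lam = 0) :
    ∀ p : ℝ × ℝ, 0 < p.1 → 0 < p.2 →
      (py Sx p + px Sy p = 4 * px q p * py q p) ∧
      (px Sx p = 2 * (px q p) ^ 2) ∧
      (py Sy p = 2 * (py q p) ^ 2) ∧
      (deriv (deriv A) p.1 - Sx p / (q p) ^ 2 * deriv A p.1 =
        deriv (deriv B) p.2 - Sy p / (q p) ^ 2 * deriv B p.2) ∧
      (-(lam / (q p) ^ 2) =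
        (1 / 2) * (deriv (deriv A) p.1 - Sx p / (q p) ^ 2 * deriv A p.1)
        - (px q p * deriv A p.1 + px (px q) p * A p.1
            + py q p * deriv B p.2 + py (py q) p * B p.2) / q p
        + ((px q p) ^ 2 * A p.1 + (py q p) ^ 2 * B p.2) / (q p) ^ 2
        + (Sx p * px q p * A p.1 + Sy p * py q p * B p.2) / (q p) ^ 3) := by
  intro p hx hy
  have hp : p ∈ quadrant := ⟨hx, hy⟩
  have hμx : μα * (2 * α - 1) = 2 * α ^ 2 :=
    hμα ▸ div_mul_cancel₀ _ (by contrapose! hα; linarith)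
  have hμy : μ1α * (1 - 2 * α) = 2 * (1 - α) ^ 2 :=
    hμ1α ▸ div_mul_cancel₀ _ (by contrapose! hα; linarith)
  have hμ : μα + μ1α = 2 := hμα ▸ hμ1α ▸ two_sq_div_add_two_sq_div_eq_two hα
  have hqm : EqOn q (rpowMonomial 1 α (1 - α)) quadrant := fun p hp => by
    rw [hq p hp.1 hp.2, rpowMonomial, one_mul]
  have hSxm : EqOn Sx (rpowMonomial μα (2 * α - 1) (2 * (1 - α))) quadrant := fun p hp => by
    rw [hSx p hp.1 hp.2, hqm hp, mul_rpowMonomial_sq_div_fst hp]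
  have hSym : EqOn Sy (rpowMonomial μ1α (2 * α) (2 * (1 - α) - 1)) quadrant := fun p hp => by
    rw [hSy p hp.1 hp.2, hqm hp, mul_rpowMonomial_sq_div_snd hp]
  have hq0 : q p ≠ 0 := by rw [hqm hp, rpowMonomial]; positivity
  have hA₂ := mul_deriv_deriv_sub_of_eq_quad_add_rpow hA hx
  have hA₁ := mul_deriv_sub_of_eq_quad_add_rpow hA hx
  have hB₂ := mul_deriv_deriv_sub_of_eq_quad_add_rpow hB hy
  have hB₁ := mul_deriv_sub_of_eq_quad_add_rpow hB hy
  rw [px_px_eq_of_eqOn_rpowMonomial hqm hp, py_py_eq_of_eqOn_rpowMonomial hqm hp,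
    px_eq_of_eqOn_rpowMonomial hqm hp, py_eq_of_eqOn_rpowMonomial hqm hp,
    px_eq_of_eqOn_rpowMonomial hSxm hp, py_eq_of_eqOn_rpowMonomial hSxm hp,
    px_eq_of_eqOn_rpowMonomial hSym hp, py_eq_of_eqOn_rpowMonomial hSym hp,
    hSx p hx hy, hSy p hx hy, hlam]
  refine ⟨?_, ?_, ?_, ?_, ?_⟩ <;> field_simp
  · linear_combination 2 * α * hμ - 2 * hμx
  · linear_combination hμx
  · linear_combination hμy
  · linear_combination p.2 * hA₂ - p.1 * hB₂ - 2 * c * p.1 * p.2 * hμ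
  · linear_combination -(q p ^ 2) * (p.1 * p.2 ^ 2 * hA₂ - 2 * α * p.2 ^ 2 * hA₁
      - 2 * p.1 ^ 2 * (1 - α) * hB₁ - 2 * c * (1 - α) * p.1 ^ 2 * p.2 ^ 2 * hμ)
end

section
/- Let I, J ⊆ ℝ be open intervals, let a : I → ℝ and b : J → ℝ be continuous and nowhere vanishing, let c : I → ℝ be continuous, and let r : I × J → ℝ be a C¹ function satisfying a(x) ∂_x r(x,y) + b(y) ∂_y r(x,y) = c(x) for all (x,y) ∈ I × J. Let f : I → ℝ be an antiderivative of 1/a, let g : J → ℝ be an antiderivative of 1/b, and let C : I → ℝ be an antiderivative of c/a. Then there exists a single-variable function θ : ℝ → ℝ such that r(x,y) = θ(f(x) − g(y)) + C(x) for all (x,y) ∈ I × J. -/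
open Real Set

/-!
Along a curve `x ↦ (x, Y x)` with `Y' = b(Y)/a` the equation says exactly that `r - C` has
derivative zero, and these curves are the level sets of `f x - g y`. As `1/a` and `1/b` never
vanish, `f` and `g` are strictly monotone (Darboux), so `g` has a differentiable inverse and the
level set `f x - g y = s` is the graph `y = g⁻¹(f x - s)` over an interval of `x`. Hence `r - C`
is constant on it, and `θ s` is that constant.
-/

theorem strictMonoOn_or_strictAntiOn_of_hasDerivAt_ne_zero {s : Set ℝ} (hs : Convex ℝ s)
    {f f' : ℝ → ℝ} (hf : ∀ x ∈ s, HasDerivAt f (f' x) x) (hf' : ∀ x ∈ s, f' x ≠ 0) :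
    StrictMonoOn f s ∨ StrictAntiOn f s := by
  have hfc : ContinuousOn f s := fun x hx => (hf x hx).continuousAt.continuousWithinAt
  have hint : ∀ x ∈ interior s, HasDerivWithinAt f (f' x) (interior s) x :=
    fun x hx => (hf x (interior_subset hx)).hasDerivWithinAt
  rcases hasDerivWithinAt_forall_lt_or_forall_gt_of_forall_ne hs
    (fun x hx => (hf x hx).hasDerivWithinAt) hf' with hneg | hpos
  · exact .inr <| strictAntiOn_of_hasDerivWithinAt_neg hs hfc hint
      fun x hx => hneg x (interior_subset hx)
  · exact .inl <| strictMonoOn_of_hasDerivWithinAt_pos hs hfc hint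
      fun x hx => hpos x (interior_subset hx)

theorem Set.OrdConnected.inter_preimage_of_monotoneOn_or_antitoneOn {α β : Type*}
    [PartialOrder α] [Preorder β] {s : Set α} {t : Set β} {f : α → β}
    (hs : s.OrdConnected) (ht : t.OrdConnected) (hf : MonotoneOn f s ∨ AntitoneOn f s) :
    (s ∩ f ⁻¹' t).OrdConnected := by
  obtain ⟨u, hu, hsu⟩ := hf.elim ht.preimage_monotoneOn ht.preimage_antitoneOn
  rw [hsu]
  exact hs.inter hu

theorem Convex.eq_of_hasDerivWithinAt_zero {E : Type*} [NormedAddCommGroup E] [NormedSpace ℝ E]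
    {s : Set ℝ} (hs : Convex ℝ s) {φ : ℝ → E} (hφ : ∀ x ∈ s, HasDerivWithinAt φ 0 s x)
    {x y : ℝ} (hx : x ∈ s) (hy : y ∈ s) : φ x = φ y := by
  have := hs.norm_image_sub_le_of_norm_hasDerivWithin_le hφ (C := 0)
    (fun _ _ => norm_zero.le) hx hy
  rw [zero_mul, norm_le_zero_iff, sub_eq_zero] at this
  exact this.symm

theorem hasDerivAt_invFunOn_of_injOn {𝕜 : Type*} [RCLike 𝕜] {s : Set 𝕜} (hs : IsOpen s)
    {g g' : 𝕜 → 𝕜} (hg : ∀ y ∈ s, HasDerivAt g (g' y) y) (hg'c : ContinuousOn g' s)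
    (hg' : ∀ y ∈ s, g' y ≠ 0) (hinj : InjOn g s) {y : 𝕜} (hy : y ∈ s) :
    HasDerivAt (Function.invFunOn g s) (g' y)⁻¹ (g y) := by
  have hstrict : HasStrictDerivAt g (g' y) y :=
    hasStrictDerivAt_of_hasDerivAt_of_continuousAt
      (Filter.eventually_of_mem (hs.mem_nhds hy) hg) (hg'c.continuousAt (hs.mem_nhds hy))
  exact (hstrict.to_local_left_inverse (hg' y hy)
    (Filter.eventually_of_mem (hs.mem_nhds hy) fun _ hz => hinj.leftInvOn_invFunOn hz)).hasDerivAt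

theorem HasFDerivAt.px_eq {r : ℝ × ℝ → ℝ} {L : ℝ × ℝ →L[ℝ] ℝ} {p : ℝ × ℝ}
    (hr : HasFDerivAt r L p) : px r p = L (1, 0) :=
  (hr.comp_hasDerivAt p.1 ((hasDerivAt_id p.1).prodMk (hasDerivAt_const p.1 p.2))).deriv

theorem HasFDerivAt.py_eq {r : ℝ × ℝ → ℝ} {L : ℝ × ℝ →L[ℝ] ℝ} {p : ℝ × ℝ}
    (hr : HasFDerivAt r L p) : py r p = L (0, 1) :=
  (hr.comp_hasDerivAt p.2 ((hasDerivAt_const p.2 p.1).prodMk (hasDerivAt_id p.2))).deriv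

theorem DifferentiableAt.hasDerivAt_comp_prodMk {r : ℝ × ℝ → ℝ} {X Y : ℝ → ℝ} {X' Y' t : ℝ}
    (hr : DifferentiableAt ℝ r (X t, Y t)) (hX : HasDerivAt X X' t) (hY : HasDerivAt Y Y' t) :
    HasDerivAt (fun t => r (X t, Y t)) (X' * px r (X t, Y t) + Y' * py r (X t, Y t)) t := by
  have hL := hr.hasFDerivAt
  have hsplit : ((X', Y') : ℝ × ℝ) = X' • ((1 : ℝ), (0 : ℝ)) + Y' • ((0 : ℝ), (1 : ℝ)) := by
    simp
  have := hL.comp_hasDerivAt t (hX.prodMk hY)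
  rwa [hsplit, map_add, map_smul, map_smul, smul_eq_mul, smul_eq_mul, ← hL.px_eq,
    ← hL.py_eq] at this

theorem hasDerivAt_sub_along_characteristic {r : ℝ × ℝ → ℝ} {Y C : ℝ → ℝ} {x α β γ : ℝ}
    (hα : α ≠ 0) (hr : DifferentiableAt ℝ r (x, Y x))
    (hpde : α * px r (x, Y x) + β * py r (x, Y x) = γ)
    (hY : HasDerivAt Y (β / α) x) (hC : HasDerivAt C (γ / α) x) :
    HasDerivAt (fun t => r (t, Y t) - C t) 0 x := by
  refine ((hr.hasDerivAt_comp_prodMk (hasDerivAt_id' x) hY).sub hC).congr_deriv ?_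
  field_simp
  linear_combination hpde

theorem transport_solution_constant_on_characteristics {I J : Set ℝ}
    (hI : IsOpen I) (hIconv : Convex ℝ I) (hJ : IsOpen J) (hJconv : Convex ℝ J)
    {a b c : ℝ → ℝ} (ha0 : ∀ x ∈ I, a x ≠ 0) (hb : ContinuousOn b J) (hb0 : ∀ y ∈ J, b y ≠ 0)
    {r : ℝ × ℝ → ℝ} (hr : DifferentiableOn ℝ r (I ×ˢ J))
    (hpde : ∀ x ∈ I, ∀ y ∈ J, a x * px r (x, y) + b y * py r (x, y) = c x)
    {f g C : ℝ → ℝ} (hf : ∀ x ∈ I, HasDerivAt f (1 / a x) x)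
    (hg : ∀ y ∈ J, HasDerivAt g (1 / b y) y) (hC : ∀ x ∈ I, HasDerivAt C (c x / a x) x) :
    ∀ p ∈ I ×ˢ J, ∀ q ∈ I ×ˢ J, f p.1 - g p.2 = f q.1 - g q.2 → r p - C p.1 = r q - C q.1 := by
  rintro ⟨x₁, y₁⟩ ⟨hx₁, hy₁⟩ ⟨x₂, y₂⟩ ⟨hx₂, hy₂⟩ (hlevel : f x₁ - g y₁ = f x₂ - g y₂)
  set s := f x₁ - g y₁
  have hg' : ∀ y ∈ J, 1 / b y ≠ 0 := fun y hy => one_div_ne_zero (hb0 y hy)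
  have hginj : InjOn g J :=
    (strictMonoOn_or_strictAntiOn_of_hasDerivAt_ne_zero hJconv hg hg').elim
      StrictMonoOn.injOn StrictAntiOn.injOn
  set Y : ℝ → ℝ := fun x => Function.invFunOn g J (f x - s)
  set D := I ∩ f ⁻¹' ((fun y => g y + s) '' J)
  have hY : ∀ x ∈ I, ∀ y ∈ J, g y + s = f x → Y x = y ∧ HasDerivAt Y (b y / a x) x := by
    intro x hx y hy hxy
    have hfx : f x - s = g y := by rw [← hxy, add_sub_cancel_right]
    have hG := hasDerivAt_invFunOn_of_injOn hJ hg (continuousOn_const.div hb hb0) hg' hginj hy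
    rw [← hfx] at hG
    refine ⟨by simp only [Y, hfx, hginj.leftInvOn_invFunOn hy], ?_⟩
    refine (hG.comp x ((hf x hx).sub_const s)).congr_deriv ?_
    field_simp [hb0 y hy]
  have hD : Convex ℝ D := by
    refine (hIconv.ordConnected.inter_preimage_of_monotoneOn_or_antitoneOn ?_ ?_).convex
    · have hgc : ContinuousOn g J := fun y hy => (hg y hy).continuousAt.continuousWithinAt
      exact (hJconv.isPreconnected.image _ (hgc.add continuousOn_const)).ordConnected
    · exact (strictMonoOn_or_strictAntiOn_of_hasDerivAt_ne_zero hIconv hf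
        fun x hx => one_div_ne_zero (ha0 x hx)).imp StrictMonoOn.monotoneOn StrictAntiOn.antitoneOn
  have hconst : ∀ x ∈ D, HasDerivAt (fun t => r (t, Y t) - C t) 0 x := by
    rintro x ⟨hx, y, hy, hxy⟩
    obtain ⟨hYx, hYd⟩ := hY x hx y hy hxy
    subst hYx
    exact hasDerivAt_sub_along_characteristic (ha0 x hx)
      ((hr _ ⟨hx, hy⟩).differentiableAt ((hI.prod hJ).mem_nhds ⟨hx, hy⟩))
      (hpde x hx _ hy) hYd (hC x hx)
  have h₁ : g y₁ + s = f x₁ := by simp [s]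
  have h₂ : g y₂ + s = f x₂ := by simp [s, hlevel]
  have := hD.eq_of_hasDerivWithinAt_zero (fun x hx => (hconst x hx).hasDerivWithinAt)
    ⟨hx₁, y₁, hy₁, h₁⟩ ⟨hx₂, y₂, hy₂, h₂⟩
  simpa only [(hY x₁ hx₁ y₁ hy₁ h₁).1, (hY x₂ hx₂ y₂ hy₂ h₂).1] using this

theorem transport_equation_solution_form_general
    (I J : Set ℝ)
    (hI : IsOpen I) (hIconv : Convex ℝ I)
    (hJ : IsOpen J) (hJconv : Convex ℝ J)
    (a c : ℝ → ℝ) (b : ℝ → ℝ)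
    (ha0 : ∀ x ∈ I, a x ≠ 0)
    (hb : ContinuousOn b J) (hb0 : ∀ y ∈ J, b y ≠ 0)
    (r : ℝ × ℝ → ℝ) (hr : ContDiffOn ℝ 1 r (I ×ˢ J))
    (hpde : ∀ x ∈ I, ∀ y ∈ J, a x * px r (x, y) + b y * py r (x, y) = c x)
    (f g C : ℝ → ℝ)
    (hf : ∀ x ∈ I, HasDerivAt f (1 / a x) x)
    (hg : ∀ y ∈ J, HasDerivAt g (1 / b y) y)
    (hC : ∀ x ∈ I, HasDerivAt C (c x / a x) x) :
    ∃ θ : ℝ → ℝ, ∀ x ∈ I, ∀ y ∈ J, r (x, y) = θ (f x - g y) + C x := by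
  set level : I ×ˢ J → ℝ := fun p => f p.1.1 - g p.1.2
  have hfactors : Function.FactorsThrough (fun p : I ×ˢ J => r p - C p.1.1) level :=
    fun p q hpq => transport_solution_constant_on_characteristics hI hIconv hJ hJconv ha0 hb hb0
      (hr.differentiableOn one_ne_zero) hpde hf hg hC p p.2 q q.2 hpq
  exact ⟨Function.extend level (fun p => r p - C p.1.1) 0, fun x hx y hy =>
    eq_add_of_sub_eq (hfactors.extend_apply 0 ⟨(x, y), hx, hy⟩).symm⟩

/-- solutions of `a(x) ∂ₓr + b(y) ∂_y r = c(x)` on a product of open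
intervals have the form `r = θ(f(x) − g(y)) + C(x)` where `f' = 1/a`, `g' = 1/b`,
`C' = c/a`. -/
theorem transport_equation_solution_form
    (I J : Set ℝ)
    (hI : IsOpen I) (hIconv : Convex ℝ I)
    (hJ : IsOpen J) (hJconv : Convex ℝ J)
    (a c : ℝ → ℝ) (b : ℝ → ℝ)
    (ha : ContinuousOn a I) (ha0 : ∀ x ∈ I, a x ≠ 0)
    (hb : ContinuousOn b J) (hb0 : ∀ y ∈ J, b y ≠ 0)
    (hc : ContinuousOn c I)
    (r : ℝ × ℝ → ℝ) (hr : ContDiffOn ℝ 1 r (I ×ˢ J))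
    (hpde : ∀ x ∈ I, ∀ y ∈ J, a x * px r (x, y) + b y * py r (x, y) = c x)
    (f g C : ℝ → ℝ)
    (hf : ∀ x ∈ I, HasDerivAt f (1 / a x) x)
    (hg : ∀ y ∈ J, HasDerivAt g (1 / b y) y)
    (hC : ∀ x ∈ I, HasDerivAt C (c x / a x) x) :
    ∃ θ : ℝ → ℝ, ∀ x ∈ I, ∀ y ∈ J, r (x, y) = θ (f x - g y) + C x :=
  transport_equation_solution_form_general I J hI hIconv hJ hJconv a c b ha0 hb hb0 r hr hpde f g C
    hf hg hC
end
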